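/- Let d ≥ 1 and p = (d+1)(d+2)/2, and let f(x,y) = Σ_{j+l ≤ d} c_{j,l}·x^{2j}·y^{2l} be a real polynomial in the even monomials x^{2j} y^{2l} with j + l ≤ d, whose coefficients satisfy |c_{j,l}| ≤ 1 for all j, l. Let δ > 0 and let (x_i, y_i), i = 1,…,N, be points with x_i > 0 and y_i − δ > 0, and suppose that for each i there exists Δy_i with |Δy_i| ≤ δ such that f(x_i, y_i + Δy_i) = 0. Then Σ_{i=1}^N f(x_i, y_i)² ≤ 2·(d+1)·(d+2)·δ²·Σ_{i=1}^N h_d(x_i, y_i + δ), where h_d(x,y) = y²·Σ_{j,l ≥ 0, j+l ≤ d−1} (l+1)²·x^{4j}·y^{4l}. -/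
import Mathlib

/-- The finite set of exponent pairs `(j, l)` with `j + l ≤ d`. -/
def evenSupp (d : ℕ) : Finset (ℕ × ℕ) :=
  (Finset.range (d + 1) ×ˢ Finset.range (d + 1)).filter fun m => m.1 + m.2 ≤ d

lemma two_mul_card_evenSupp (d : ℕ) : 2 * (evenSupp d).card = (d + 1) * (d + 2) := by
  induction d with
  | zero => decide
  | succ d ih =>
    have hsplit : evenSupp (d + 1) =
        evenSupp d ∪ (Finset.range (d + 2)).image (fun j => (j, d + 1 - j)) := by
      ext ⟨j, l⟩
      simp only [evenSupp, Finset.mem_filter, Finset.mem_product, Finset.mem_range,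
        Finset.mem_union, Finset.mem_image, Prod.mk.injEq]
      constructor
      · rintro ⟨⟨hj, hl⟩, hjl⟩
        by_cases h : j + l ≤ d
        · left; exact ⟨⟨by omega, by omega⟩, h⟩
        · right; exact ⟨j, by omega, rfl, by omega⟩
      · rintro (⟨⟨hj, hl⟩, hjl⟩ | ⟨a, ha, rfl, rfl⟩)
        · exact ⟨⟨by omega, by omega⟩, by omega⟩
        · exact ⟨⟨by omega, by omega⟩, by omega⟩
    have hdisj : Disjoint (evenSupp d)
        ((Finset.range (d + 2)).image (fun j => (j, d + 1 - j))) := by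
      rw [Finset.disjoint_left]
      rintro ⟨j, l⟩ hm hm'
      simp only [evenSupp, Finset.mem_filter, Finset.mem_product, Finset.mem_range] at hm
      simp only [Finset.mem_image, Finset.mem_range, Prod.mk.injEq] at hm'
      obtain ⟨a, ha, rfl, rfl⟩ := hm'
      omega
    have hcard : ((Finset.range (d + 2)).image (fun j => (j, d + 1 - j))).card = d + 2 := by
      rw [Finset.card_image_of_injOn, Finset.card_range]
      intro a _ b _ h
      exact congrArg Prod.fst h
    rw [hsplit, Finset.card_union_of_disjoint hdisj, hcard]
    have : (d + 1 + 1) * (d + 1 + 2) = (d + 1) * (d + 2) + 2 * (d + 2) := by ring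
    omega

lemma sum_evenSupp_shift (d : ℕ) (hd : 1 ≤ d) (g : ℕ × ℕ → ℝ)
    (hg : ∀ j, g (j, 0) = 0) :
    ∑ m ∈ evenSupp d, g m = ∑ m ∈ evenSupp (d - 1), g (m.1, m.2 + 1) := by
  rw [← Finset.sum_filter_ne_zero (evenSupp d)]
  have hsub : Finset.filter (fun m => g m ≠ 0) (evenSupp d) ⊆
      Finset.filter (fun m => m.2 ≠ 0) (evenSupp d) := by
    intro m hm
    simp only [Finset.mem_filter] at hm ⊢
    refine ⟨hm.1, fun h => hm.2 ?_⟩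
    have : m = (m.1, 0) := by rw [← h]
    rw [this, hg]
  rw [Finset.sum_subset hsub (by
    intro m hm hnm
    by_contra h
    exact hnm (Finset.mem_filter.2 ⟨(Finset.mem_filter.1 hm).1, h⟩))]
  refine Finset.sum_nbij' (fun m => (m.1, m.2 - 1)) (fun m => (m.1, m.2 + 1)) ?_ ?_ ?_ ?_ ?_
  · rintro ⟨j, l⟩ hm
    simp only [evenSupp, Finset.mem_filter, Finset.mem_product, Finset.mem_range, ne_eq] at hm ⊢
    omega
  · rintro ⟨j, l⟩ hm
    simp only [evenSupp, Finset.mem_filter, Finset.mem_product, Finset.mem_range, ne_eq] at hm ⊢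
    omega
  · rintro ⟨j, l⟩ hm
    simp only [evenSupp, Finset.mem_filter, Finset.mem_product, Finset.mem_range, ne_eq] at hm
    simp only [Prod.mk.injEq, true_and]
    omega
  · rintro ⟨j, l⟩ hm; rfl
  · rintro ⟨j, l⟩ hm
    simp only [evenSupp, Finset.mem_filter, Finset.mem_product, Finset.mem_range, ne_eq] at hm
    have : (j, l - 1 + 1) = ((j, l) : ℕ × ℕ) := by
      simp only [Prod.mk.injEq, true_and]
      omega
    rw [this]

lemma abs_pow_sub_pow_le' {a b M δ : ℝ} (ha : 0 ≤ a) (hb : 0 ≤ b)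
    (haM : a ≤ M) (hbM : b ≤ M) (hab : |a - b| ≤ δ) (n : ℕ) :
    |a ^ n - b ^ n| ≤ n * M ^ (n - 1) * δ := by
  have hM : 0 ≤ M := le_trans ha haM
  rw [← geom_sum₂_mul a b n, abs_mul]
  have h1 : |∑ i ∈ Finset.range n, a ^ i * b ^ (n - 1 - i)| ≤ n * M ^ (n - 1) := by
    calc |∑ i ∈ Finset.range n, a ^ i * b ^ (n - 1 - i)|
        ≤ ∑ i ∈ Finset.range n, |a ^ i * b ^ (n - 1 - i)| :=
          Finset.abs_sum_le_sum_abs _ _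
      _ ≤ ∑ _i ∈ Finset.range n, M ^ (n - 1) := by
          refine Finset.sum_le_sum fun i hi => ?_
          rw [Finset.mem_range] at hi
          rw [abs_mul, abs_pow, abs_pow, abs_of_nonneg ha, abs_of_nonneg hb]
          calc a ^ i * b ^ (n - 1 - i) ≤ M ^ i * M ^ (n - 1 - i) :=
                mul_le_mul (pow_le_pow_left₀ ha haM i) (pow_le_pow_left₀ hb hbM _)
                  (pow_nonneg hb _) (pow_nonneg hM _)
            _ = M ^ (n - 1) := by rw [← pow_add]; congr 1; omega
      _ = n * M ^ (n - 1) := by rw [Finset.sum_const, Finset.card_range, nsmul_eq_mul]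
  have h2 : 0 ≤ (n : ℝ) * M ^ (n - 1) := by positivity
  exact mul_le_mul h1 hab (abs_nonneg _) h2

lemma key_pointwise (d : ℕ) (hd : 1 ≤ d) (c : ℕ × ℕ → ℝ)
    (hc : ∀ m ∈ evenSupp d, |c m| ≤ 1)
    (δ : ℝ) (hδ : 0 < δ) (x y Δy : ℝ)
    (hx : 0 < x) (hy : 0 < y - δ) (hΔy : |Δy| ≤ δ)
    (hzero : ∑ m ∈ evenSupp d, c m * x ^ (2 * m.1) * (y + Δy) ^ (2 * m.2) = 0) :
    (∑ m ∈ evenSupp d, c m * x ^ (2 * m.1) * y ^ (2 * m.2)) ^ 2 ≤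
      2 * (d + 1) * (d + 2) * δ ^ 2 *
        ((y + δ) ^ 2 * ∑ m ∈ evenSupp (d - 1),
          ((m.2 : ℝ) + 1) ^ 2 * x ^ (4 * m.1) * (y + δ) ^ (4 * m.2)) := by
  set z := y + Δy with hz
  set M := y + δ with hM
  have hΔy' := abs_le.1 hΔy
  have h0y : 0 ≤ y := by linarith
  have h0z : 0 ≤ z := by simp only [hz]; linarith
  have hyM : y ≤ M := by simp only [hM]; linarith
  have hzM : z ≤ M := by simp only [hz, hM]; linarith
  have hyz : |y - z| ≤ δ := by
    simp only [hz]
    rw [show y - (y + Δy) = -Δy by ring, abs_neg]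
    exact hΔy
  set a : ℕ × ℕ → ℝ := fun m => 2 * (m.2 : ℝ) * x ^ (2 * m.1) * M ^ (2 * m.2 - 1) with ha
  have ha_nonneg : ∀ m ∈ evenSupp d, 0 ≤ a m := by
    intro m _
    have : (0:ℝ) ≤ M := by linarith
    positivity
  -- step 1 : |f(x,y)| ≤ δ * ∑ a
  have step1 : |∑ m ∈ evenSupp d, c m * x ^ (2 * m.1) * y ^ (2 * m.2)| ≤
      δ * ∑ m ∈ evenSupp d, a m := by
    have hdiff : ∑ m ∈ evenSupp d, c m * x ^ (2 * m.1) * y ^ (2 * m.2) =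
        ∑ m ∈ evenSupp d, c m * x ^ (2 * m.1) * (y ^ (2 * m.2) - z ^ (2 * m.2)) := by
      rw [← sub_zero (∑ m ∈ evenSupp d, c m * x ^ (2 * m.1) * y ^ (2 * m.2)),
        ← hzero, ← Finset.sum_sub_distrib]
      exact Finset.sum_congr rfl fun m _ => by ring
    rw [hdiff, Finset.mul_sum]
    refine (Finset.abs_sum_le_sum_abs _ _).trans (Finset.sum_le_sum fun m hm => ?_)
    rw [abs_mul, abs_mul, abs_pow, abs_of_nonneg hx.le]
    have hbound := abs_pow_sub_pow_le' h0y h0z hyM hzM hyz (2 * m.2)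
    calc |c m| * x ^ (2 * m.1) * |y ^ (2 * m.2) - z ^ (2 * m.2)|
        ≤ 1 * x ^ (2 * m.1) * ((2 * m.2 : ℕ) * M ^ (2 * m.2 - 1) * δ) := by
          refine mul_le_mul (mul_le_mul_of_nonneg_right (hc m hm) (by positivity))
            hbound (abs_nonneg _) (by positivity)
      _ = δ * a m := by simp only [ha]; push_cast; ring
  -- step 2 : Cauchy-Schwarz
  have step2 : (∑ m ∈ evenSupp d, c m * x ^ (2 * m.1) * y ^ (2 * m.2)) ^ 2 ≤
      δ ^ 2 * ((evenSupp d).card * ∑ m ∈ evenSupp d, (a m) ^ 2) := by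
    have h1 : (∑ m ∈ evenSupp d, c m * x ^ (2 * m.1) * y ^ (2 * m.2)) ^ 2 ≤
        (δ * ∑ m ∈ evenSupp d, a m) ^ 2 := by
      rw [← sq_abs (∑ m ∈ evenSupp d, c m * x ^ (2 * m.1) * y ^ (2 * m.2))]
      exact pow_le_pow_left₀ (abs_nonneg _) step1 2
    refine h1.trans ?_
    rw [mul_pow]
    refine mul_le_mul_of_nonneg_left ?_ (by positivity)
    exact sq_sum_le_card_mul_sum_sq
  refine step2.trans ?_
  -- step 3 : rewrite ∑ a² via shift
  have hshift : ∑ m ∈ evenSupp d, (a m) ^ 2 =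
      4 * M ^ 2 * ∑ m ∈ evenSupp (d - 1),
        ((m.2 : ℝ) + 1) ^ 2 * x ^ (4 * m.1) * M ^ (4 * m.2) := by
    rw [sum_evenSupp_shift d hd (fun m => (a m) ^ 2)
      (fun j => by simp [ha]), Finset.mul_sum]
    refine Finset.sum_congr rfl fun m _ => ?_
    simp only [ha]
    have e1 : 2 * (m.2 + 1) - 1 = 2 * m.2 + 1 := by omega
    have e2 : 4 * m.1 = 2 * m.1 + 2 * m.1 := by omega
    have e3 : 4 * m.2 = (2 * m.2 + 1) + (2 * m.2 + 1) - 2 := by omega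
    rw [e1]
    push_cast
    rw [show ((2:ℝ) * ((m.2:ℝ) + 1) * x ^ (2 * m.1) * M ^ (2 * m.2 + 1)) ^ 2 =
      4 * ((m.2:ℝ) + 1) ^ 2 * (x ^ (2 * m.1) * x ^ (2 * m.1)) *
        (M ^ (2 * m.2 + 1) * M ^ (2 * m.2 + 1)) by ring, ← pow_add, ← pow_add, ← e2]
    rw [show (2 * m.2 + 1) + (2 * m.2 + 1) = 4 * m.2 + 2 by omega, pow_add]
    ring
  rw [hshift]
  -- step 4 : arithmetic with card
  have hcard : ((evenSupp d).card : ℝ) * 4 = 2 * (d + 1) * (d + 2) := by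
    have := two_mul_card_evenSupp d
    have : ((2 * (evenSupp d).card : ℕ) : ℝ) = (((d + 1) * (d + 2) : ℕ) : ℝ) := by
      rw [this]
    push_cast at this
    linarith
  rw [show δ ^ 2 * ((evenSupp d).card * (4 * M ^ 2 * ∑ m ∈ evenSupp (d - 1),
        ((m.2 : ℝ) + 1) ^ 2 * x ^ (4 * m.1) * M ^ (4 * m.2))) =
      ((evenSupp d).card * 4) * δ ^ 2 * (M ^ 2 * ∑ m ∈ evenSupp (d - 1),
        ((m.2 : ℝ) + 1) ^ 2 * x ^ (4 * m.1) * M ^ (4 * m.2)) by ring, hcard]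

/-- Let `f(x,y) = ∑_{j+l ≤ d} c_{j,l} x^{2j} y^{2l}` with
`|c_{j,l}| ≤ 1`, and suppose the curve `f = 0` passes through each vertical
segment `{x_i} × [y_i − δ, y_i + δ]` (with `x_i > 0`, `y_i − δ > 0`). Then
`∑_i f(x_i, y_i)² ≤ 2 (d+1) (d+2) δ² ∑_i h_d(x_i, y_i + δ)`, where
`h_d(x,y) = y² ∑_{j+l ≤ d−1} (l+1)² x^{4j} y^{4l}`. -/
theorem sum_sq_le_of_even_poly_passes_through_segments
    (d : ℕ) (hd : 1 ≤ d) (N : ℕ) (c : ℕ × ℕ → ℝ)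
    (hc : ∀ m ∈ evenSupp d, |c m| ≤ 1)
    (δ : ℝ) (hδ : 0 < δ) (x y : Fin N → ℝ)
    (hx : ∀ i, 0 < x i) (hy : ∀ i, 0 < y i - δ)
    (Δy : Fin N → ℝ) (hΔy : ∀ i, |Δy i| ≤ δ)
    (hzero : ∀ i, ∑ m ∈ evenSupp d,
      c m * (x i) ^ (2 * m.1) * (y i + Δy i) ^ (2 * m.2) = 0) :
    ∑ i, (∑ m ∈ evenSupp d, c m * (x i) ^ (2 * m.1) * (y i) ^ (2 * m.2)) ^ 2 ≤
      2 * (d + 1) * (d + 2) * δ ^ 2 *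
        ∑ i, (y i + δ) ^ 2 * ∑ m ∈ evenSupp (d - 1),
          ((m.2 : ℝ) + 1) ^ 2 * (x i) ^ (4 * m.1) * (y i + δ) ^ (4 * m.2) := by
  rw [Finset.mul_sum]
  exact Finset.sum_le_sum fun i _ =>
    key_pointwise d hd c hc δ hδ (x i) (y i) (Δy i) (hx i) (hy i) (hΔy i) (hzero i)
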